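/- Let 𝓘, 𝓙 be three-valued interpretations with 𝓘 ≤p 𝓙, and let E be a ground expression (a ground metric atom, the negation not M of a ground metric atom, or a conjunction E₁∧…∧E_m of such). Then for all t ∈ 𝕋, ⟦E⟧_𝓘(t) ≤p ⟦E⟧_𝓙(t), where on truth values (identified with pairs) ≤p is the precision order undef ≤p false and undef ≤p true. -/

import Mathlib

/- DatalogMTL with negation: common definitions.
   The timeline `T` is an arbitrary linearly ordered additive commutative group
   (covering both ℤ and ℚ); `A` is the type of ground relational atoms. -/

namespace DatalogMTL

/-- An interval on the timeline: a nonempty convex subset whose infimum and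
supremum lie in `T ∪ {−∞, +∞}` (i.e. if bounded below/above, a greatest lower /
least upper bound exists in `T`). -/
structure TInterval (T : Type*) [AddCommGroup T] [LinearOrder T] [IsOrderedAddMonoid T] where
  carrier : Set T
  nonempty : carrier.Nonempty
  convex : ∀ ⦃t₁ t₂ t : T⦄, t₁ ∈ carrier → t₂ ∈ carrier → t₁ < t → t < t₂ → t ∈ carrier
  exists_glb : BddBelow carrier → ∃ a, IsGLB carrier a
  exists_lub : BddAbove carrier → ∃ b, IsLUB carrier b

/-- A non-negative interval. -/
def TInterval.Nonneg {T : Type*} [AddCommGroup T] [LinearOrder T] [IsOrderedAddMonoid T] (δ : TInterval T) : Prop :=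
  ∀ t ∈ δ.carrier, 0 ≤ t

/-- The type of non-negative intervals. -/
abbrev NNInterval (T : Type*) [AddCommGroup T] [LinearOrder T] [IsOrderedAddMonoid T] :=
  {δ : TInterval T // δ.Nonneg}

/-- A (two-valued) interpretation assigns to each timepoint a set of ground
relational atoms; the order is pointwise inclusion. -/
abbrev Interp (T A : Type*) := T → Set A

/-- Ground metric atoms. -/
inductive MetricAtom (T : Type*) [AddCommGroup T] [LinearOrder T] [IsOrderedAddMonoid T] (A : Type*) where
  | top
  | bot
  | rel (a : A)
  | dMinus (δ : NNInterval T) (M : MetricAtom T A)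
  | dPlus (δ : NNInterval T) (M : MetricAtom T A)
  | boxMinus (δ : NNInterval T) (M : MetricAtom T A)
  | boxPlus (δ : NNInterval T) (M : MetricAtom T A)
  | sSince (δ : NNInterval T) (M₁ M₂ : MetricAtom T A)
  | sUntil (δ : NNInterval T) (M₁ M₂ : MetricAtom T A)

/-- Ground head atoms: `⊤ | P(s) | ⊟_δ M | ⊞_δ M`. -/
inductive HeadAtom (T : Type*) [AddCommGroup T] [LinearOrder T] [IsOrderedAddMonoid T] (A : Type*) where
  | top
  | rel (a : A)
  | boxMinus (δ : NNInterval T) (M : HeadAtom T A)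
  | boxPlus (δ : NNInterval T) (M : HeadAtom T A)

variable {T A : Type*} [AddCommGroup T] [LinearOrder T] [IsOrderedAddMonoid T]

/-- Head atoms are metric atoms. -/
def HeadAtom.toMetric : HeadAtom T A → MetricAtom T A
  | .top => .top
  | .rel a => .rel a
  | .boxMinus δ M => .boxMinus δ M.toMetric
  | .boxPlus δ M => .boxPlus δ M.toMetric

/-- Two-valued semantics: `sat I M t` holds iff `⟦M⟧_I(t) = true`
(the truth order `false ≤τ true` is implication). -/
def sat (I : Interp T A) : MetricAtom T A → T → Prop
  | .top, _ => True
  | .bot, _ => False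
  | .rel a, t => a ∈ I t
  | .dMinus δ M, t => ∃ t', t - t' ∈ δ.1.carrier ∧ sat I M t'
  | .dPlus δ M, t => ∃ t', t' - t ∈ δ.1.carrier ∧ sat I M t'
  | .boxMinus δ M, t => ∀ t', t - t' ∈ δ.1.carrier → sat I M t'
  | .boxPlus δ M, t => ∀ t', t' - t ∈ δ.1.carrier → sat I M t'
  | .sSince δ M₁ M₂, t =>
      ∃ t', t - t' ∈ δ.1.carrier ∧ sat I M₂ t' ∧ ∀ t'', t' < t'' → t'' < t → sat I M₁ t''
  | .sUntil δ M₁ M₂, t =>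
      ∃ t', t' - t ∈ δ.1.carrier ∧ sat I M₂ t' ∧ ∀ t'', t < t'' → t'' < t' → sat I M₁ t''

/-- A ground rule body `M₁ ∧ … ∧ M_k ∧ not M_{k+1} ∧ … ∧ not M_m`. -/
structure Body (T : Type*) [AddCommGroup T] [LinearOrder T] [IsOrderedAddMonoid T] (A : Type*) where
  pos : List (MetricAtom T A)
  neg : List (MetricAtom T A)

/-- Two-valued evaluation of a body: the `≤τ`-infimum (conjunction) of its literals. -/
def Body.holds (B : Body T A) (I : Interp T A) (t : T) : Prop :=
  (∀ M ∈ B.pos, sat I M t) ∧ (∀ M ∈ B.neg, ¬ sat I M t)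

/-- A ground rule `M ← B`. -/
structure Rule (T : Type*) [AddCommGroup T] [LinearOrder T] [IsOrderedAddMonoid T] (A : Type*) where
  head : HeadAtom T A
  body : Body T A

/-- A program, represented by its grounding `ground(Π)`: a set of ground rules. -/
abbrev Program (T : Type*) [AddCommGroup T] [LinearOrder T] [IsOrderedAddMonoid T] (A : Type*) := Set (Rule T A)

/-- The function `F` linking a ground head atom to the (atom, timepoint) pairs it refers to. -/
def F : HeadAtom T A → T → Set (HeadAtom T A × T)
  | .boxMinus δ M, t => ⋃ t' ∈ {s : T | t - s ∈ δ.1.carrier}, F M t'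
  | .boxPlus δ M, t => ⋃ t' ∈ {s : T | s - t ∈ δ.1.carrier}, F M t'
  | .top, t => {(.top, t)}
  | .rel a, t => {(.rel a, t)}

/-- A dataset: a finite set of relational facts `P(s)@δ`. -/
structure Dataset (T : Type*) [AddCommGroup T] [LinearOrder T] [IsOrderedAddMonoid T] (A : Type*) where
  facts : Set (A × TInterval T)
  finite : facts.Finite

/-- `I` is a model of the dataset `D`. -/
def Interp.modelOfDataset (I : Interp T A) (D : Dataset T A) : Prop :=
  ∀ a δ, (a, δ) ∈ D.facts → ∀ t ∈ δ.carrier, a ∈ I t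

/-- `I` is a two-valued model of `D` and `Π`. -/
def IsTwoValModel (I : Interp T A) (D : Dataset T A) (P : Program T A) : Prop :=
  I.modelOfDataset D ∧ ∀ r ∈ P, ∀ t : T, r.body.holds I t → sat I r.head.toMetric t

/- Three-valued truth values are identified with consistent pairs of (Prop-valued)
truth values: `true = (True, True)`, `undef = (False, True)`, `false = (False, False)`.
The truth order `false ≤τ undef ≤τ true` is the componentwise order. -/

/-- The three-valued value of a ground metric atom in `𝓘 = (I₁, I₂)`. -/
def tv3 (I₁ I₂ : Interp T A) (M : MetricAtom T A) (t : T) : Prop × Prop :=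
  (sat I₁ M t, sat I₂ M t)

/-- The three-valued value of a negated ground metric atom `not M` in `𝓘 = (I₁, I₂)`:
the inverse `(·)⁻¹` of the value of `M`. -/
def tv3Not (I₁ I₂ : Interp T A) (M : MetricAtom T A) (t : T) : Prop × Prop :=
  (¬ sat I₂ M t, ¬ sat I₁ M t)

/-- Three-valued evaluation of a body: the `≤τ`-infimum of the values of its literals. -/
def Body.holds3 (B : Body T A) (I₁ I₂ : Interp T A) (t : T) : Prop × Prop :=
  ((∀ M ∈ B.pos, sat I₁ M t) ∧ (∀ M ∈ B.neg, ¬ sat I₂ M t),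
   (∀ M ∈ B.pos, sat I₂ M t) ∧ (∀ M ∈ B.neg, ¬ sat I₁ M t))

/-- The truth order `≤τ` on (pair-encoded) truth values. -/
def tauLE (u v : Prop × Prop) : Prop := (u.1 → v.1) ∧ (u.2 → v.2)

/-- The precision order `≤p` on (pair-encoded) truth values: `undef ≤p false`, `undef ≤p true`. -/
def precLE (u v : Prop × Prop) : Prop := (u.1 → v.1) ∧ (v.2 → u.2)

/-- A truth value equals `true = (True, True)`. -/
def tvIsTrue (v : Prop × Prop) : Prop := v.1 ∧ v.2

/-- A truth value differs from `false = (False, False)`. -/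
def tvNotFalse (v : Prop × Prop) : Prop := v.1 ∨ v.2

/-- The `≤τ`-infimum of a set of (pair-encoded) truth values. -/
def tvInf (S : Set (Prop × Prop)) : Prop × Prop := (∀ v ∈ S, v.1, ∀ v ∈ S, v.2)

/-- `(I₁, I₂)` is a three-valued model of the program `Π`. -/
def IsThreeValModelOfProgram (I₁ I₂ : Interp T A) (P : Program T A) : Prop :=
  ∀ r ∈ P, ∀ t : T, tauLE (r.body.holds3 I₁ I₂ t) (tv3 I₁ I₂ r.head.toMetric t)

/-- `(I₁, I₂)` is a three-valued model of `D` and `Π`. -/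
def IsThreeValModel (I₁ I₂ : Interp T A) (D : Dataset T A) (P : Program T A) : Prop :=
  IsThreeValModelOfProgram I₁ I₂ P ∧ I₁.modelOfDataset D

/-- The atoms holding at `t` by virtue of the dataset alone. -/
def dataFacts (D : Dataset T A) (t : T) : Set A :=
  {a | ∃ δ : TInterval T, (a, δ) ∈ D.facts ∧ t ∈ δ.carrier}

/-- The immediate consequence operator `T_{𝒟,Π}`. -/
def Tds (D : Dataset T A) (P : Program T A) (I : Interp T A) : Interp T A := fun t =>
  dataFacts D t ∪
    {a | ∃ r ∈ P, ∃ t' : T, r.body.holds I t' ∧ (HeadAtom.rel a, t) ∈ F r.head t'}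

/-- The first component `A¹_{𝒟,Π}` of the three-valued immediate consequence operator. -/
def A1 (D : Dataset T A) (P : Program T A) (I₁ I₂ : Interp T A) : Interp T A := fun t =>
  dataFacts D t ∪
    {a | ∃ r ∈ P, ∃ t' : T, tvIsTrue (r.body.holds3 I₁ I₂ t') ∧ (HeadAtom.rel a, t) ∈ F r.head t'}

/-- The second component `A²_{𝒟,Π}` of the three-valued immediate consequence operator. -/
def A2 (D : Dataset T A) (P : Program T A) (I₁ I₂ : Interp T A) : Interp T A := fun t =>
  dataFacts D t ∪
    {a | ∃ r ∈ P, ∃ t' : T, tvNotFalse (r.body.holds3 I₁ I₂ t') ∧ (HeadAtom.rel a, t) ∈ F r.head t'}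

/-- `(I₁, I₂)` is an HT-model of `D` and `Π` (Definition of Wałęga et al.). -/
def IsHTModel (D : Dataset T A) (P : Program T A) (I₁ I₂ : Interp T A) : Prop :=
  I₁.modelOfDataset D ∧ ∀ r ∈ P, ∀ t : T,
    (((∀ M ∈ r.body.pos, sat I₁ M t) ∧ (∀ M ∈ r.body.neg, ¬ sat I₂ M t)) →
        sat I₁ r.head.toMetric t) ∧
    (((∀ M ∈ r.body.pos, sat I₂ M t) ∧ (∀ M ∈ r.body.neg, ¬ sat I₂ M t)) →
        sat I₂ r.head.toMetric t)

/-- `I` is a stable HT-model of `D` and `Π`: `(I,I)` is an HT-model and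
`I = ⊓ {J : (J,I) is an HT-model of D and Π}`. -/
def IsStableHTModel (D : Dataset T A) (P : Program T A) (I : Interp T A) : Prop :=
  IsHTModel D P I I ∧ I = sInf {J : Interp T A | IsHTModel D P J I}

end DatalogMTL

namespace DatalogMTL

variable {T A : Type*} [AddCommGroup T] [LinearOrder T] [IsOrderedAddMonoid T]

/- Every metric operator is monotone in its arguments (negation is only allowed at the level
of rule bodies), so two-valued satisfaction is monotone in the interpretation. -/
theorem sat_mono {I J : Interp T A} (h : I ≤ J) (M : MetricAtom T A) :
    ∀ t, sat I M t → sat J M t := by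
  induction M with
  | top | bot => exact fun _ => id
  | rel a => exact fun t => (h t ·)
  | dMinus _ _ ih | dPlus _ _ ih => exact fun _ ⟨t', hδ, hM⟩ => ⟨t', hδ, ih t' hM⟩
  | boxMinus _ _ ih | boxPlus _ _ ih => exact fun _ hM t' hδ => ih t' (hM t' hδ)
  | sSince _ _ _ ih₁ ih₂ | sUntil _ _ _ ih₁ ih₂ =>
    exact fun _ ⟨t', hδ, hM₂, hM₁⟩ => ⟨t', hδ, ih₂ t' hM₂, fun s hs₁ hs₂ => ih₁ s (hM₁ s hs₁ hs₂)⟩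

section Precision

variable {I₁ I₂ J₁ J₂ : Interp T A} (h₁ : I₁ ≤ J₁) (h₂ : J₂ ≤ I₂)
include h₁ h₂

theorem tv3_precLE (M : MetricAtom T A) (t : T) : precLE (tv3 I₁ I₂ M t) (tv3 J₁ J₂ M t) :=
  ⟨sat_mono h₁ M t, sat_mono h₂ M t⟩

theorem tv3Not_precLE (M : MetricAtom T A) (t : T) :
    precLE (tv3Not I₁ I₂ M t) (tv3Not J₁ J₂ M t) :=
  ⟨mt (sat_mono h₂ M t), mt (sat_mono h₁ M t)⟩

theorem Body.holds3_precLE (B : Body T A) (t : T) :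
    precLE (B.holds3 I₁ I₂ t) (B.holds3 J₁ J₂ t) :=
  ⟨fun ⟨hpos, hneg⟩ => ⟨fun M hM => sat_mono h₁ M t (hpos M hM),
      fun M hM => mt (sat_mono h₂ M t) (hneg M hM)⟩,
    fun ⟨hpos, hneg⟩ => ⟨fun M hM => sat_mono h₂ M t (hpos M hM),
      fun M hM => mt (sat_mono h₁ M t) (hneg M hM)⟩⟩

end Precision

end DatalogMTL

theorem statement6_general {T A : Type*} [AddCommGroup T] [LinearOrder T] [IsOrderedAddMonoid T]
    (I₁ I₂ J₁ J₂ : DatalogMTL.Interp T A)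
    (h₁ : I₁ ≤ J₁) (h₂ : J₂ ≤ I₂) :
    (∀ (M : DatalogMTL.MetricAtom T A) (t : T),
        DatalogMTL.precLE (DatalogMTL.tv3 I₁ I₂ M t) (DatalogMTL.tv3 J₁ J₂ M t)) ∧
    (∀ (M : DatalogMTL.MetricAtom T A) (t : T),
        DatalogMTL.precLE (DatalogMTL.tv3Not I₁ I₂ M t) (DatalogMTL.tv3Not J₁ J₂ M t)) ∧
    (∀ (B : DatalogMTL.Body T A) (t : T),
        DatalogMTL.precLE (B.holds3 I₁ I₂ t) (B.holds3 J₁ J₂ t)) :=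
  ⟨DatalogMTL.tv3_precLE h₁ h₂, DatalogMTL.tv3Not_precLE h₁ h₂,
    DatalogMTL.Body.holds3_precLE h₁ h₂⟩

/-- If `𝓘 = (I₁,I₂)` and `𝓙 = (J₁,J₂)` are three-valued
interpretations with `𝓘 ≤p 𝓙`, then for every ground expression `E` (a ground
metric atom, a negated ground metric atom, or a conjunction of such, i.e. a body)
and every `t ∈ 𝕋`, `⟦E⟧_𝓘(t) ≤p ⟦E⟧_𝓙(t)`. -/
theorem statement6 {T A : Type*} [AddCommGroup T] [LinearOrder T] [IsOrderedAddMonoid T]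
    (I₁ I₂ J₁ J₂ : DatalogMTL.Interp T A) (hI : I₁ ≤ I₂) (hJ : J₁ ≤ J₂)
    (h₁ : I₁ ≤ J₁) (h₂ : J₂ ≤ I₂) :
    (∀ (M : DatalogMTL.MetricAtom T A) (t : T),
        DatalogMTL.precLE (DatalogMTL.tv3 I₁ I₂ M t) (DatalogMTL.tv3 J₁ J₂ M t)) ∧
    (∀ (M : DatalogMTL.MetricAtom T A) (t : T),
        DatalogMTL.precLE (DatalogMTL.tv3Not I₁ I₂ M t) (DatalogMTL.tv3Not J₁ J₂ M t)) ∧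
    (∀ (B : DatalogMTL.Body T A) (t : T),
        DatalogMTL.precLE (B.holds3 I₁ I₂ t) (B.holds3 J₁ J₂ t)) :=
  statement6_general I₁ I₂ J₁ J₂ h₁ h₂
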